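/- arXiv:2003.09554 — 2 statements merged into one kernel-verified Lean document; each statement's English description precedes it below -/
import Mathlib

section
/- Let f : Fin m → [0,1] and let π be a permutation of Fin m. Let M be the greedy monotonization of f along π (as in the greedy median construction). Then M is feasible: for every x ∈ Fin m, M(x) ≤ max_{y ≤ x} f(y). -/
open Finset

/-- One step of the greedy monotonization: assign a value at point `p`,
clamping `f p` between the previously assigned value at the largest assigned
point below `p` (`L`, or `-∞` if none) and the previously assigned value at the
smallest assigned point above `p` (`H`, or `+∞` if none); i.e. the median of
`{f p, L, H}`. -/
noncomputable def greedyStep {m : ℕ} (f : Fin m → ℝ) (s : Fin m → Option ℝ) (p : Fin m) :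
    Fin m → Option ℝ :=
  let B := Finset.univ.filter (fun y => y < p ∧ (s y).isSome)
  let A := Finset.univ.filter (fun y => p < y ∧ (s y).isSome)
  let L : Option ℝ := if h : B.Nonempty then s (B.max' h) else none
  let H : Option ℝ := if h : A.Nonempty then s (A.min' h) else none
  let v1 : ℝ :=
    match H with
    | some hv => min (f p) hv
    | none => f p
  let v2 : ℝ :=
    match L with
    | some lv => max v1 lv
    | none => v1
  fun y => if y = p then some v2 else s y

/-- State of the greedy monotonization after processing the first `n` points
`π 0, π 1, …, π (n-1)` of the permutation `π`. -/
noncomputable def greedyState {m : ℕ} (f : Fin m → ℝ) (π : Equiv.Perm (Fin m)) :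
    ℕ → Fin m → Option ℝ
  | 0 => fun _ => none
  | n + 1 =>
    if h : n < m then greedyStep f (greedyState f π n) (π ⟨n, h⟩)
    else greedyState f π n

/-- The greedy monotonization `M^π_f` of `f` along the permutation `π`. -/
noncomputable def greedyMono {m : ℕ} (f : Fin m → ℝ) (π : Equiv.Perm (Fin m)) (x : Fin m) : ℝ :=
  (greedyState f π m x).getD 0

/-!
Clamping `f p` from above can only lower it, so the value assigned at `p` is either at most
`f p` or a copy of the value already assigned at a point `b < p`. Since prefix maxima of `f`
are monotone, the invariant "every assigned value at `z` is at most `max_{y ≤ z} f y`" is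
preserved by each step. After all `m` steps every point has been assigned, so the default
value of `greedyMono` never enters.
-/

section prefixMax

variable {α β : Type*} [Preorder α] [LocallyFiniteOrderBot α] [SemilatticeSup β] (f : α → β)

def prefixMax (x : α) : β :=
  (Iic x).sup' ⟨x, mem_Iic.2 le_rfl⟩ f

lemma le_prefixMax (x : α) : f x ≤ prefixMax f x :=
  le_sup' f (mem_Iic.2 le_rfl)

lemma prefixMax_mono : Monotone (prefixMax f) := fun _ _ hzy =>
  sup'_mono f (Iic_subset_Iic.2 hzy) _

end prefixMax

def IsFeasiblePartial {m : ℕ} (f : Fin m → ℝ) (s : Fin m → Option ℝ) : Prop :=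
  ∀ z w, s z = some w → w ≤ prefixMax f z

section greedyStep

variable {m : ℕ} (f : Fin m → ℝ) (s : Fin m → Option ℝ) (p : Fin m)

lemma greedyStep_of_ne {y : Fin m} (hy : y ≠ p) : greedyStep f s p y = s y := by
  simp only [greedyStep, if_neg hy]

lemma isSome_greedyStep {y : Fin m} (hy : y = p ∨ (s y).isSome) :
    (greedyStep f s p y).isSome := by
  by_cases hyp : y = p
  · simp [greedyStep, hyp]
  · rw [greedyStep_of_ne f s p hyp]
    exact hy.resolve_left hyp

lemma greedyStep_self_le_or_exists_lt {v : ℝ} (h : greedyStep f s p p = some v) :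
    v ≤ f p ∨ ∃ b < p, s b = some v := by
  simp only [greedyStep, if_pos rfl, Option.some_inj] at h
  subst h
  set B := univ.filter (fun y => y < p ∧ (s y).isSome)
  have hv₁ : ∀ H : Option ℝ, (match H with
      | some hv => min (f p) hv
      | none => f p) ≤ f p := by
    rintro (_ | hv)
    exacts [le_rfl, min_le_left _ _]
  split
  next lv hL =>
    rcases max_choice _ lv with hmax | hmax <;> rw [hmax]
    · exact .inl (hv₁ _)
    · by_cases hB : B.Nonempty
      · rw [dif_pos hB] at hL
        obtain ⟨-, hlt, -⟩ := mem_filter.1 (B.max'_mem hB)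
        exact .inr ⟨B.max' hB, hlt, hL⟩
      · simp [dif_neg hB] at hL
  next => exact .inl (hv₁ _)

lemma IsFeasiblePartial.greedyStep (hs : IsFeasiblePartial f s) :
    IsFeasiblePartial f (greedyStep f s p) := by
  intro y v h
  by_cases hyp : y = p
  · subst hyp
    rcases greedyStep_self_le_or_exists_lt f s y h with hle | ⟨b, hby, hb⟩
    · exact hle.trans (le_prefixMax f y)
    · exact (hs b v hb).trans (prefixMax_mono f hby.le)
  · rw [greedyStep_of_ne f s p hyp] at h
    exact hs y v h

end greedyStep

section greedyState

variable {m : ℕ} (f : Fin m → ℝ) (π : Equiv.Perm (Fin m))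

lemma isFeasiblePartial_greedyState (n : ℕ) : IsFeasiblePartial f (greedyState f π n) := by
  induction n with
  | zero => intro y v h; simp [greedyState] at h
  | succ n ih =>
    rw [greedyState]
    split
    · exact ih.greedyStep f _ _
    · exact ih

lemma isSome_greedyState_of_lt {n k : ℕ} (hk : k < m) (hkn : k < n) :
    (greedyState f π n (π ⟨k, hk⟩)).isSome := by
  induction n with
  | zero => omega
  | succ n ih =>
    rw [greedyState]
    split
    next =>
      apply isSome_greedyStep
      rcases Nat.lt_succ_iff_lt_or_eq.1 hkn with hlt | rfl
      · exact .inr (ih hlt)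
      · exact .inl rfl
    next hn => exact ih (by omega)

lemma isSome_greedyState_final (x : Fin m) : (greedyState f π m x).isSome := by
  simpa using isSome_greedyState_of_lt f π (π.symm x).isLt (π.symm x).isLt

end greedyState

theorem stmt1_general {m : ℕ} (f : Fin m → ℝ)
    (π : Equiv.Perm (Fin m)) (x : Fin m) :
    greedyMono f π x ≤ (Finset.Iic x).sup' ⟨x, Finset.mem_Iic.2 le_rfl⟩ f := by
  obtain ⟨v, hv⟩ := Option.isSome_iff_exists.1 (isSome_greedyState_final f π x)
  rw [greedyMono, hv, Option.getD_some]
  exact isFeasiblePartial_greedyState f π m x v hv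

/-- the greedy monotonization is feasible: at every point `x` its
value is at most `max_{y ≤ x} f y`. -/
theorem stmt1 {m : ℕ} (f : Fin m → ℝ) (hf : ∀ x, f x ∈ Set.Icc (0:ℝ) 1)
    (π : Equiv.Perm (Fin m)) (x : Fin m) :
    greedyMono f π x ≤ (Finset.Iic x).sup' ⟨x, Finset.mem_Iic.2 le_rfl⟩ f :=
  stmt1_general f π x
end

section
/- For any f : Fin m → [0,1] and permutation π, the greedy monotonization satisfies the layer-cake identity M^π_f(x) = ∫_0^1 M^π_{[f>t]}(x) dt for every x ∈ Fin m, where [f>t] is the indicator function of {y : f(y) > t}. -/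
open Finset

/-! A greedy step sets the new value to the median of `f p` and the values at the nearest
assigned neighbours, so it commutes with every monotone map `g : ℝ → ℝ`, which commutes with
`min` and `max`. For the threshold maps `v ↦ [v > t]` this gives `M^π_{[f>t]} = [M^π_f > t]`,
and for the clamp onto `[0, 1]` it shows that `M^π_f` takes values in `[0, 1]`; the identity is
then the layer-cake formula `a = ∫_0^1 [a > t] dt`. -/

section GreedyComp

variable {m : ℕ}

noncomputable def lowerNeighborValue (s : Fin m → Option ℝ) (p : Fin m) : Option ℝ :=
  let B := Finset.univ.filter (fun y => y < p ∧ (s y).isSome)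
  if h : B.Nonempty then s (B.max' h) else none

noncomputable def upperNeighborValue (s : Fin m → Option ℝ) (p : Fin m) : Option ℝ :=
  let A := Finset.univ.filter (fun y => p < y ∧ (s y).isSome)
  if h : A.Nonempty then s (A.min' h) else none

def clampOpt (L H : Option ℝ) (a : ℝ) : ℝ :=
  let v := match H with
    | some h => min a h
    | none => a
  match L with
  | some l => max v l
  | none => v

lemma greedyStep_eq_update (f : Fin m → ℝ) (s : Fin m → Option ℝ) (p : Fin m) :
    greedyStep f s p = Function.update s p
      (some (clampOpt (lowerNeighborValue s p) (upperNeighborValue s p) (f p))) := by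
  funext y
  unfold greedyStep
  by_cases hy : y = p
  · rw [if_pos hy, Function.update_apply, if_pos hy]
    rfl
  · rw [if_neg hy, Function.update_apply, if_neg hy]

lemma lowerNeighborValue_map (g : ℝ → ℝ) (s : Fin m → Option ℝ) (p : Fin m) :
    lowerNeighborValue (fun y => (s y).map g) p = (lowerNeighborValue s p).map g := by
  unfold lowerNeighborValue
  simp only [Option.isSome_map]
  split_ifs <;> rfl

lemma upperNeighborValue_map (g : ℝ → ℝ) (s : Fin m → Option ℝ) (p : Fin m) :
    upperNeighborValue (fun y => (s y).map g) p = (upperNeighborValue s p).map g := by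
  unfold upperNeighborValue
  simp only [Option.isSome_map]
  split_ifs <;> rfl

lemma Monotone.clampOpt_map {g : ℝ → ℝ} (hg : Monotone g) (L H : Option ℝ) (a : ℝ) :
    clampOpt (L.map g) (H.map g) (g a) = g (clampOpt L H a) := by
  cases L <;> cases H <;> simp [clampOpt, hg.map_min, hg.map_max]

lemma Monotone.greedyStep_comp {g : ℝ → ℝ} (hg : Monotone g) (f : Fin m → ℝ)
    (s : Fin m → Option ℝ) (p : Fin m) :
    greedyStep (g ∘ f) (fun y => (s y).map g) p = fun y => (greedyStep f s p y).map g := by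
  funext y
  rw [greedyStep_eq_update, greedyStep_eq_update, lowerNeighborValue_map, upperNeighborValue_map,
    Function.comp_apply, hg.clampOpt_map]
  by_cases hy : y = p
  · subst hy; simp
  · simp [hy]

lemma Monotone.greedyState_comp {g : ℝ → ℝ} (hg : Monotone g) (f : Fin m → ℝ)
    (π : Equiv.Perm (Fin m)) (n : ℕ) :
    greedyState (g ∘ f) π n = fun y => (greedyState f π n y).map g := by
  induction n with
  | zero => rfl
  | succ n ih =>
    unfold greedyState
    split_ifs
    · rw [ih, hg.greedyStep_comp]
    · exact ih

-- `g 0 = 0` is needed only because `greedyMono` reads an unassigned point as `0`.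
lemma Monotone.greedyMono_comp {g : ℝ → ℝ} (hg : Monotone g) (hg0 : g 0 = 0) (f : Fin m → ℝ)
    (π : Equiv.Perm (Fin m)) (x : Fin m) :
    greedyMono (g ∘ f) π x = g (greedyMono f π x) := by
  unfold greedyMono
  rw [hg.greedyState_comp]
  rcases h : greedyState f π m x with _ | v <;> simp [h, hg0]

lemma greedyMono_mem_Icc {a b : ℝ} (h0 : (0 : ℝ) ∈ Set.Icc a b) {f : Fin m → ℝ}
    (hf : ∀ y, f y ∈ Set.Icc a b) (π : Equiv.Perm (Fin m)) (x : Fin m) :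
    greedyMono f π x ∈ Set.Icc a b := by
  have hab : a ≤ b := h0.1.trans h0.2
  set clamp : ℝ → ℝ := fun v => Set.projIcc a b hab v
  have hclamp : Monotone clamp := fun _ _ h => Set.monotone_projIcc hab h
  have hfix : clamp ∘ f = f := funext fun y => by simp [clamp, Set.projIcc_of_mem hab (hf y)]
  rw [← hfix, hclamp.greedyMono_comp (by simp [clamp, Set.projIcc_of_mem hab h0])]
  exact Subtype.prop _

lemma monotone_ite_lt (t : ℝ) : Monotone fun v : ℝ => if t < v then (1 : ℝ) else 0 := by
  intro u v huv
  dsimp only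
  split_ifs <;> linarith

lemma integral_ite_lt {a : ℝ} (ha : a ∈ Set.Icc (0 : ℝ) 1) :
    ∫ t in (0 : ℝ)..1, (if t < a then (1 : ℝ) else 0) = a := by
  have hind : (fun t : ℝ => if t < a then (1 : ℝ) else 0) = (Set.Iio a).indicator 1 := by
    funext t
    simp [Set.indicator_apply]
  have hset : Set.Iio a ∩ Set.Ioc 0 1 = Set.Ioo 0 a := by
    ext t
    simp only [Set.mem_inter_iff, Set.mem_Iio, Set.mem_Ioc, Set.mem_Ioo]
    constructor
    · rintro ⟨hta, h0t, -⟩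
      exact ⟨h0t, hta⟩
    · rintro ⟨h0t, hta⟩
      exact ⟨hta, h0t, hta.le.trans ha.2⟩
  rw [intervalIntegral.integral_of_le zero_le_one, hind,
    MeasureTheory.integral_indicator_one measurableSet_Iio,
    MeasureTheory.measureReal_restrict_apply measurableSet_Iio, hset,
    Real.volume_real_Ioo_of_le ha.1, sub_zero]

end GreedyComp

open scoped Classical in
/-- layer-cake identity for the greedy monotonization:
`M^π_f(x) = ∫_0^1 M^π_{[f>t]}(x) dt`. -/
theorem stmt7 {m : ℕ} (f : Fin m → ℝ) (hf : ∀ x, f x ∈ Set.Icc (0:ℝ) 1)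
    (π : Equiv.Perm (Fin m)) (x : Fin m) :
    greedyMono f π x =
      ∫ t in (0:ℝ)..1, greedyMono (fun y => if t < f y then (1:ℝ) else 0) π x := by
  have hx := greedyMono_mem_Icc (Set.left_mem_Icc.2 zero_le_one) hf π x
  rw [← integral_ite_lt hx]
  refine intervalIntegral.integral_congr fun t ht => ?_
  have ht0 : 0 ≤ t := by
    rw [Set.uIcc_of_le zero_le_one] at ht
    exact ht.1
  exact ((monotone_ite_lt t).greedyMono_comp (if_neg ht0.not_gt) f π x).symm
end
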